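/- If a and b are indistinguishable vertices of a graph G (equal closed neighborhoods), then after eliminating a, the vertex b is simplicial in the elimination graph G_a. -/

import Mathlib

open SimpleGraph

attribute [local instance] Classical.propDecidable

variable {V : Type*} [Fintype V] [DecidableEq V]

/-- The elimination graph `G_x`: delete `x` and complete its neighborhood to a clique.
(The eliminated vertex is kept as an isolated vertex.) -/
def elimG (G : SimpleGraph V) (x : V) : SimpleGraph V where
  Adj u v := u ≠ v ∧ u ≠ x ∧ v ≠ x ∧ (G.Adj u v ∨ (G.Adj x u ∧ G.Adj x v))
  symm := by
    constructor
    intro u v h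
    obtain ⟨h1, h2, h3, h4⟩ := h
    refine ⟨h1.symm, h3, h2, ?_⟩
    rcases h4 with h | ⟨h4, h5⟩
    · exact Or.inl h.symm
    · exact Or.inr ⟨h5, h4⟩
  loopless := by constructor; intro v h; exact h.1 rfl

/-- The deficiency `D(x)`: the set of unordered pairs of distinct, non-adjacent
neighbors of `x`. -/
noncomputable def deficiencyFinset (G : SimpleGraph V) (x : V) : Finset (Sym2 V) :=
  ((Finset.univ ×ˢ Finset.univ : Finset (V × V)).filter
    (fun p => p.1 ≠ p.2 ∧ G.Adj x p.1 ∧ G.Adj x p.2 ∧ ¬ G.Adj p.1 p.2)).image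
    (fun p => s(p.1, p.2))

/-- Successive elimination of a list of vertices. -/
def elimList : SimpleGraph V → List V → SimpleGraph V
  | G, [] => G
  | G, x :: xs => elimList (elimG G x) xs

/-- The fill-in of an elimination ordering given as a list: the total number of
edges added during the elimination process. -/
noncomputable def fillList : SimpleGraph V → List V → ℕ
  | _, [] => 0
  | G, x :: xs => (deficiencyFinset G x).card + fillList (elimG G x) xs

/-- The set of fill edges added during the elimination process. -/
noncomputable def fillEdges : SimpleGraph V → List V → Finset (Sym2 V)
  | _, [] => ∅
  | G, x :: xs => deficiencyFinset G x ∪ fillEdges (elimG G x) xs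

/-- A list is an (elimination) ordering if it enumerates every vertex exactly once. -/
def IsOrdering (L : List V) : Prop := L.Nodup ∧ ∀ v : V, v ∈ L

/-- The minimum fill-in `Φ(G)`. -/
noncomputable def minFillIn (G : SimpleGraph V) : ℕ :=
  sInf {n | ∃ L : List V, IsOrdering L ∧ fillList G L = n}

/-- A vertex is simplicial if its neighborhood is a clique. -/
def IsSimplicial (G : SimpleGraph V) (x : V) : Prop :=
  ∀ a b, G.Adj x a → G.Adj x b → a ≠ b → G.Adj a b

/-- `a` and `b` are indistinguishable: equal closed neighborhoods. -/
def Indistinguishable (G : SimpleGraph V) (a b : V) : Prop :=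
  a ≠ b ∧ insert a (G.neighborSet a) = insert b (G.neighborSet b)

/-- `a` and `b` are twins: equal open neighborhoods (hence non-adjacent). -/
def Twins (G : SimpleGraph V) (a b : V) : Prop :=
  a ≠ b ∧ G.neighborSet a = G.neighborSet b

/-- Chordality: no induced cycle of length at least 4, equivalently every cycle of
length at least 4 has a chord. -/
def IsChordal (G : SimpleGraph V) : Prop :=
  ∀ n : ℕ, 4 ≤ n → ∀ f : ZMod n → V, Function.Injective f →
    ¬ (∀ i j : ZMod n, G.Adj (f i) (f j) ↔ (j = i + 1 ∨ i = j + 1))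

/-- `T` is a triangulation of `G`: a set of non-edges whose addition makes `G` chordal. -/
def IsTriangulation (G : SimpleGraph V) (T : Finset (Sym2 V)) : Prop :=
  (∀ e ∈ T, ¬ e.IsDiag ∧ e ∉ G.edgeSet) ∧
    IsChordal (G ⊔ SimpleGraph.fromEdgeSet (↑T : Set (Sym2 V)))

/-- A minimum triangulation. -/
def IsMinTriangulation (G : SimpleGraph V) (T : Finset (Sym2 V)) : Prop :=
  IsTriangulation G T ∧ ∀ T' : Finset (Sym2 V), IsTriangulation G T' → T.card ≤ T'.card

/-- The graph obtained from `G` by deleting the vertices in `S`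
(deleted vertices are kept as isolated vertices). -/
def deleteSet (G : SimpleGraph V) (S : Set V) : SimpleGraph V where
  Adj u v := G.Adj u v ∧ u ∉ S ∧ v ∉ S
  symm := ⟨fun _ _ ⟨h, hu, hv⟩ => ⟨h.symm, hv, hu⟩⟩
  loopless := ⟨fun v h => G.loopless.irrefl v h.1⟩

section

variable {W : Type*} {G : SimpleGraph W} {a b u v : W}

theorem elimG_adj_ne_right (h : (elimG G a).Adj u v) : v ≠ a := h.2.2.1

theorem elimG_adj_of_adj_of_adj (huv : u ≠ v) (hua : u ≠ a) (hva : v ≠ a)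
    (hau : G.Adj a u) (hav : G.Adj a v) : (elimG G a).Adj u v :=
  ⟨huv, hua, hva, Or.inr ⟨hau, hav⟩⟩

theorem adj_of_adj_of_insert_neighborSet_eq
    (hN : insert a (G.neighborSet a) = insert b (G.neighborSet b))
    (hbu : G.Adj b u) (hua : u ≠ a) : G.Adj a u := by
  have hu : u ∈ insert b (G.neighborSet b) := Set.mem_insert_of_mem b hbu
  rw [← hN] at hu
  exact hu.resolve_left hua

theorem adj_of_elimG_adj_of_insert_neighborSet_eq
    (hN : insert a (G.neighborSet a) = insert b (G.neighborSet b))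
    (hbu : (elimG G a).Adj b u) : G.Adj a u := by
  obtain ⟨-, -, hua, hbu | ⟨-, hau⟩⟩ := hbu
  · exact adj_of_adj_of_insert_neighborSet_eq hN hbu hua
  · exact hau

end

/-- if `a` and `b` are indistinguishable, then `b` is simplicial in `G_a`. -/
theorem stmt_6 (G : SimpleGraph V) (a b : V) (h : Indistinguishable G a b) :
    IsSimplicial (elimG G a) b := by
  intro u v hu hv huv
  exact elimG_adj_of_adj_of_adj huv (elimG_adj_ne_right hu) (elimG_adj_ne_right hv)
    (adj_of_elimG_adj_of_insert_neighborSet_eq h.2 hu)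
    (adj_of_elimG_adj_of_insert_neighborSet_eq h.2 hv)
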